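/- arXiv:math/0210042 — 3 statements merged into one kernel-verified Lean document; each statement's English description precedes it below -/
import Mathlib

section
/- Let k be a field of characteristic 2, n ≥ 1, and S = k[z₀,…,zₙ,x,y] the polynomial ring over k in the variables z₀,…,zₙ,x,y. Then there do not exist homogeneous polynomials u, v ∈ S of degree 1 such that the ideal (u², v²) equals the ideal (x·y, x²+y²). In particular, in characteristic 2 the ideals (x²,y²) and (xy, x²+y²) are not linearly equivalent. -/
/-!
In characteristic two every derivation kills squares, so by the Leibniz rule the ideal `(u², v²)`
is stable under `∂/∂y`. If it were `(xy, x² + y²)`, it would contain `∂(xy)/∂y = x`; but every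
element of `(xy, x² + y²)` is divisible by `x²` after setting all variables except `x` to zero.
-/

namespace Derivation

variable {R A : Type*} [CommRing R] [CommRing A] [Algebra R A] [CharP A 2]

theorem map_sq_eq_zero_of_charTwo (D : Derivation R A A) (a : A) : D (a ^ 2) = 0 := by
  rw [leibniz_pow, two_nsmul, CharTwo.add_self_eq_zero]

theorem map_mem_span_image_sq (D : Derivation R A A) {s : Set A} {f : A}
    (hf : f ∈ Ideal.span ((· ^ 2) '' s)) : D f ∈ Ideal.span ((· ^ 2) '' s) := by
  induction hf using Submodule.span_induction with
  | mem x hx =>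
    obtain ⟨a, -, rfl⟩ := hx
    rw [map_sq_eq_zero_of_charTwo]
    exact Ideal.zero_mem _
  | zero => simp
  | add x y _ _ hDx hDy => simpa using Ideal.add_mem _ hDx hDy
  | smul c x hx hDx =>
    rw [smul_eq_mul, leibniz, smul_eq_mul, smul_eq_mul]
    exact Ideal.add_mem _ (Ideal.mul_mem_left _ c hDx) (Ideal.mul_mem_right _ _ hx)

end Derivation

namespace MvPolynomial

variable {σ R : Type*} [CommRing R] [Nontrivial R]

theorem X_notMem_span_X_mul_X_X_sq_add_X_sq {i j : σ} (hij : j ≠ i) :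
    (X i : MvPolynomial σ R) ∉ Ideal.span {X i * X j, X i ^ 2 + X j ^ 2} := by
  classical
  intro hmem
  obtain ⟨a, b, hab⟩ := Ideal.mem_span_pair.mp hmem
  let onlyXi : σ → Polynomial R := fun l ↦ if l = i then Polynomial.X else 0
  have hdvd : (Polynomial.X : Polynomial R) ^ 2 ∣ Polynomial.X :=
    ⟨aeval onlyXi b, by simpa [onlyXi, hij, mul_comm] using (congrArg (aeval onlyXi) hab).symm⟩
  simpa using Polynomial.X_pow_dvd_iff.mp hdvd 1 one_lt_two

end MvPolynomial

open MvPolynomial in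
theorem stmt7_general {k : Type*} [Field k] [CharP k 2] (n : ℕ) :
    ¬ ∃ u v : MvPolynomial (Fin (n + 1) ⊕ Fin 2) k,
        u.IsHomogeneous 1 ∧ v.IsHomogeneous 1 ∧
        Ideal.span {u ^ 2, v ^ 2} =
          Ideal.span {(X (Sum.inr 0) : MvPolynomial (Fin (n + 1) ⊕ Fin 2) k) * X (Sum.inr 1),
            X (Sum.inr 0) ^ 2 + X (Sum.inr 1) ^ 2} := by
  rintro ⟨u, v, -, -, h⟩
  have hy : (Sum.inr 1 : Fin (n + 1) ⊕ Fin 2) ≠ Sum.inr 0 := by simp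
  have hxy : X (Sum.inr 0) * X (Sum.inr 1) ∈ Ideal.span ((· ^ 2) '' {u, v}) := by
    rw [Set.image_pair, h]
    exact Ideal.subset_span (by simp)
  have hx : X (Sum.inr 0) ∈ Ideal.span {u ^ 2, v ^ 2} := by
    simpa [Set.image_pair, hy.symm] using (pderiv (Sum.inr 1)).map_mem_span_image_sq hxy
  exact X_notMem_span_X_mul_X_X_sq_add_X_sq hy (h ▸ hx)

open MvPolynomial in
/-- In `S = k[z₀,…,zₙ,x,y]` with `char k = 2`, there are no linear forms `u, v` with
`(u², v²) = (x·y, x²+y²)`; in particular in characteristic two the ideals `(x², y²)` and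
`(xy, x²+y²)` are not linearly equivalent. -/
theorem stmt7 {k : Type*} [Field k] [CharP k 2] (n : ℕ) (hn : 1 ≤ n) :
    ¬ ∃ u v : MvPolynomial (Fin (n + 1) ⊕ Fin 2) k,
        u.IsHomogeneous 1 ∧ v.IsHomogeneous 1 ∧
        Ideal.span {u ^ 2, v ^ 2} =
          Ideal.span {(X (Sum.inr 0) : MvPolynomial (Fin (n + 1) ⊕ Fin 2) k) * X (Sum.inr 1),
            X (Sum.inr 0) ^ 2 + X (Sum.inr 1) ^ 2} :=
  stmt7_general n
end

section
/- Let k be a field and let F₁, F₂, F₃ ∈ k[z₀,z₁,z₂] be homogeneous polynomials, all of the same degree s ≥ 1, such that the radical of the ideal (F₁,F₂,F₃) contains the ideal (z₀,z₁,z₂) (i.e., F₁, F₂, F₃ have no common projective zero). Suppose l₁, l₂, l₃, l₄ ∈ k[z₀,z₁,z₂] satisfy the six relations F₃·l₂ = F₂·l₃, F₃·l₁ = F₁·l₃, F₂·l₁ = F₁·l₂, F₃·l₃ = F₂·l₄, F₃·l₂ = F₁·l₄, and F₂·l₂ = F₁·l₃. Then l₁ = l₂ = l₃ = l₄ = 0.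 -/
open MvPolynomial

namespace Stmt10Aux

variable {k : Type*} [Field k]

-- degree is additive
lemma degree_add' {σ : Type*} (a b : σ →₀ ℕ) :
    (a + b).degree = a.degree + b.degree := by
  simp [Finsupp.degree_eq_weight_one, map_add]

/-- homogeneous component of a product with a homogeneous polynomial -/
lemma hc_mul {σ : Type*} [DecidableEq σ] {p A : MvPolynomial σ k} {d n : ℕ} (hp : p.IsHomogeneous d) :
    homogeneousComponent (d + n) (A * p) = homogeneousComponent n A * p := by
  ext u
  rw [coeff_homogeneousComponent, coeff_mul, coeff_mul]
  split_ifs with h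
  · refine Finset.sum_congr rfl fun x hx => ?_
    rw [Finset.HasAntidiagonal.mem_antidiagonal] at hx
    rw [coeff_homogeneousComponent]
    by_cases hp2 : coeff x.2 p = 0
    · simp [hp2]
    · have hd2 : x.2.degree = d := by
        by_contra hne; exact hp2 (hp.coeff_eq_zero hne)
      have hx1 : x.1.degree = n := by
        have h' := congrArg Finsupp.degree hx
        rw [degree_add', hd2, h] at h'
        omega
      rw [if_pos hx1]
  · symm
    apply Finset.sum_eq_zero
    intro x hx
    rw [Finset.HasAntidiagonal.mem_antidiagonal] at hx
    rw [coeff_homogeneousComponent]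
    by_cases hp2 : coeff x.2 p = 0
    · simp [hp2]
    have hd2 : x.2.degree = d := by
      by_contra hne; exact hp2 (hp.coeff_eq_zero hne)
    split_ifs with h1
    · exfalso
      apply h
      have h' := congrArg Finsupp.degree hx
      rw [degree_add', hd2, h1] at h'
      omega
    · simp

/-- cancellation of homogeneity -/
lemma homog_of_mul_right {σ : Type*} [DecidableEq σ] {q c : MvPolynomial σ k} {e i : ℕ}
    (hq : q.IsHomogeneous e) (hqc : (c * q).IsHomogeneous (e + i)) (hq0 : q ≠ 0) :
    c.IsHomogeneous i := by
  have h1 : homogeneousComponent (e + i) (c * q) = c * q := by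
    rw [homogeneousComponent_of_mem hqc, if_pos rfl]
  rw [hc_mul hq] at h1
  have h2 : homogeneousComponent i c = c := mul_right_cancel₀ hq0 h1
  rw [← h2]
  exact homogeneousComponent_isHomogeneous i c

lemma not_isUnit_homog {σ : Type*} {F : MvPolynomial σ k} {s : ℕ}
    (hF : F.IsHomogeneous s) (hs : 1 ≤ s) : ¬ IsUnit F := by
  intro h
  obtain ⟨g, hg⟩ := isUnit_iff_exists_inv.mp h
  have hc0 : constantCoeff F = 0 := by
    have : coeff 0 F = 0 := hF.coeff_eq_zero (by simp [map_zero]; omega)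
    simpa [constantCoeff_eq] using this
  have := congrArg constantCoeff hg
  rw [map_mul, hc0, zero_mul, map_one] at this
  exact zero_ne_one this

lemma prime_X0 : Prime (X 0 : MvPolynomial (Fin 3) k) := by
  have h : Prime (Polynomial.X : Polynomial (MvPolynomial (Fin 2) k)) := Polynomial.prime_X
  rw [← MulEquiv.prime_iff (MvPolynomial.finSuccEquiv k 2).toMulEquiv]
  have he : ((MvPolynomial.finSuccEquiv k 2).toMulEquiv (X 0) :
      Polynomial (MvPolynomial (Fin 2) k)) = Polynomial.X := MvPolynomial.finSuccEquiv_X_zero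
  rw [he]
  exact h

lemma unit_of_dvd_pows {r : MvPolynomial (Fin 3) k} {N M : ℕ}
    (h0 : r ∣ (X 0 : MvPolynomial (Fin 3) k) ^ N)
    (h1 : r ∣ (X 1 : MvPolynomial (Fin 3) k) ^ M) : IsUnit r := by
  obtain ⟨i, hi, hassoc⟩ := (dvd_prime_pow prime_X0 N).mp h0
  rcases Nat.eq_zero_or_pos i with rfl | hipos
  · rw [pow_zero] at hassoc
    exact hassoc.symm.isUnit isUnit_one
  · exfalso
    have hX0r : (X 0 : MvPolynomial (Fin 3) k) ∣ r := by
      have : (X 0 : MvPolynomial (Fin 3) k) ∣ X 0 ^ i := dvd_pow_self _ (by omega)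
      exact this.trans hassoc.symm.dvd
    have hX01 : (X 0 : MvPolynomial (Fin 3) k) ∣ X 1 :=
      prime_X0.dvd_of_dvd_pow (hX0r.trans h1)
    obtain ⟨t, ht⟩ := hX01
    have := congrArg (eval (fun j : Fin 3 => if j = 0 then (0 : k) else 1)) ht
    simp at this


variable {k : Type*} [Field k]

/-- degree-t exponent vectors on `Fin 3` are in bijection with `Sym (Fin 3) t`. -/
noncomputable def degEquivSym (t : ℕ) : {d : Fin 3 →₀ ℕ // d.degree = t} ≃ Sym (Fin 3) t where
  toFun d := ⟨Finsupp.toMultiset d.1, by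
    rw [Finsupp.card_toMultiset]
    simpa [Finsupp.degree_apply, Finsupp.sum] using d.2⟩
  invFun s := ⟨Multiset.toFinsupp s.1, by
    have := Multiset.toFinsupp_sum_eq (s : Multiset (Fin 3))
    simpa [Finsupp.degree_apply, Finsupp.sum, s.2] using this⟩
  left_inv d := Subtype.ext (Finsupp.toMultiset_toFinsupp d.1)
  right_inv s := Subtype.ext (Multiset.toFinsupp_toMultiset s.1)

noncomputable instance degFintype (t : ℕ) : Fintype {d : Fin 3 →₀ ℕ // d.degree = t} :=
  Fintype.ofEquiv _ (degEquivSym t).symm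

noncomputable def homogEquivFun (t : ℕ) :
    (homogeneousSubmodule (Fin 3) k t) ≃ₗ[k] ({d : Fin 3 →₀ ℕ // d.degree = t} → k) := by
  classical
  exact (LinearEquiv.ofEq _ _ (homogeneousSubmodule_eq_finsupp_supported (Fin 3) k t)).trans
    (by
      haveI : Finite ({d : Fin 3 →₀ ℕ | d.degree = t}) := Finite.of_equiv _ (degEquivSym t).symm
      exact (AddMonoidAlgebra.supportedEquivFinsupp {d : Fin 3 →₀ ℕ | d.degree = t}).trans
        (Finsupp.linearEquivFunOnFinite k k _))

instance fdH (t : ℕ) : FiniteDimensional k (homogeneousSubmodule (Fin 3) k t) :=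
  Module.Finite.equiv (homogEquivFun t).symm

lemma finrank_H (t : ℕ) :
    Module.finrank k (homogeneousSubmodule (Fin 3) k t) = (t + 2).choose 2 := by
  rw [(homogEquivFun (k := k) t).finrank_eq]
  rw [Module.finrank_fintype_fun_eq_card]
  rw [Fintype.card_congr (degEquivSym t)]
  rw [Sym.card_sym_eq_choose]
  have h1 : Fintype.card (Fin 3) + t - 1 = t + 2 := by simp; omega
  rw [h1]
  have h2 := Nat.choose_symm (show t ≤ t + 2 by omega)
  rw [show t + 2 - t = 2 by omega] at h2
  exact h2.symm ▸ rfl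

lemma arith {m d e : ℕ} (hd : 1 ≤ d) (he : 1 ≤ e)
    (h : (m+d+e+2).choose 2 + (m+2).choose 2 = (m+e+2).choose 2 + (m+d+2).choose 2) :
    False := by
  have key : ∀ t : ℕ, 2 * (t+2).choose 2 = (t+2)*(t+1) := by
    intro t
    rw [Nat.choose_two_right, show t+2-1 = t+1 from rfl]
    have hdvd : 2 ∣ (t+2)*(t+1) := by
      rcases Nat.even_or_odd t with h | h
      · exact Dvd.dvd.mul_right (h.add_one.add_one.two_dvd) (t+1)
      · exact Dvd.dvd.mul_left (h.add_one.two_dvd) (t+2)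
    exact Nat.mul_div_cancel' hdvd
  have h2 := congrArg (2 * ·) h
  simp only [mul_add] at h2
  rw [key, key, key, key] at h2
  have hde : 1 ≤ d * e := Nat.one_le_iff_ne_zero.mpr (by positivity)
  nlinarith [h2, hde]


variable {k : Type*} [Field k]

lemma no_two_gens {p q : MvPolynomial (Fin 3) k} {d e : ℕ} (hd : 1 ≤ d) (he : 1 ≤ e)
    (hp : p.IsHomogeneous d) (hq : q.IsHomogeneous e) (hp0 : p ≠ 0) (hq0 : q ≠ 0)
    (hrp : IsRelPrime p q) {a0 b0 c0 : ℕ}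
    (hxa : (X 0 : MvPolynomial (Fin 3) k) ^ a0 ∈ Ideal.span {p, q})
    (hxb : (X 1 : MvPolynomial (Fin 3) k) ^ b0 ∈ Ideal.span {p, q})
    (hxc : (X 2 : MvPolynomial (Fin 3) k) ^ c0 ∈ Ideal.span {p, q}) : False := by
  set I : Ideal (MvPolynomial (Fin 3) k) := Ideal.span {p, q} with hI
  set m : ℕ := a0 + b0 + c0 with hm
  set n : ℕ := m + d + e with hn
  -- every monomial of degree ≥ m lies in I
  have hkey : ∀ (u : Fin 3 →₀ ℕ) (i : Fin 3) (N : ℕ), N ≤ u i →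
      (X i : MvPolynomial (Fin 3) k) ^ N ∈ I → (monomial u (1 : k)) ∈ I := by
    intro u i N hN hX
    have heq : (monomial u (1 : k)) = monomial (u - Finsupp.single i N) 1 * (X i) ^ N := by
      rw [X_pow_eq_monomial, monomial_mul, mul_one, tsub_add_cancel_of_le]
      exact Finsupp.single_le_iff.mpr hN
    rw [heq]
    exact Ideal.mul_mem_left _ _ hX
  have hmono : ∀ (u : Fin 3 →₀ ℕ), m ≤ u.degree → (monomial u (1 : k)) ∈ I := by
    intro u hu
    have hdeg : u.degree = u 0 + u 1 + u 2 := by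
      have h1 : u.degree = ∑ i : Fin 3, u i := by
        refine Finset.sum_subset (Finset.subset_univ _) ?_
        intro x _ hx
        simpa using Finsupp.notMem_support_iff.mp hx
      rw [h1, Fin.sum_univ_three]
    rcases (show a0 ≤ u 0 ∨ b0 ≤ u 1 ∨ c0 ≤ u 2 by omega) with h | h | h
    · exact hkey u 0 a0 h hxa
    · exact hkey u 1 b0 h hxb
    · exact hkey u 2 c0 h hxc
  -- homogeneous polynomials of degree n are in I
  have hhom : ∀ f : MvPolynomial (Fin 3) k, f.IsHomogeneous n → f ∈ I := by
    intro f hf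
    rw [← f.support_sum_monomial_coeff]
    refine Ideal.sum_mem _ fun u hu => ?_
    have hcu : coeff u f ≠ 0 := mem_support_iff.mp hu
    have hdu : u.degree = n := by
      by_contra hne
      exact hcu (hf.coeff_eq_zero hne)
    have : (monomial u (coeff u f)) = C (coeff u f) * monomial u 1 := by
      rw [C_mul_monomial, mul_one]
    rw [this]
    exact Ideal.mul_mem_left _ _ (hmono u (by omega))
  -- the two multiplication submodules
  set Hmod : ℕ → Submodule k (MvPolynomial (Fin 3) k) := fun t => homogeneousSubmodule (Fin 3) k t with hHmod
  set A : Submodule k (MvPolynomial (Fin 3) k) := (Hmod (m+e)).map (LinearMap.mulLeft k p) with hA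
  set B : Submodule k (MvPolynomial (Fin 3) k) := (Hmod (m+d)).map (LinearMap.mulLeft k q) with hB
  have hinjp : Function.Injective (LinearMap.mulLeft k p) := fun x y hxy => by
    simp only [LinearMap.mulLeft_apply] at hxy
    exact mul_left_cancel₀ hp0 hxy
  have hinjq : Function.Injective (LinearMap.mulLeft k q) := fun x y hxy => by
    simp only [LinearMap.mulLeft_apply] at hxy
    exact mul_left_cancel₀ hq0 hxy
  have hinjpq : Function.Injective (LinearMap.mulLeft k (p * q)) := fun x y hxy => by
    simp only [LinearMap.mulLeft_apply] at hxy
    exact mul_left_cancel₀ (mul_ne_zero hp0 hq0) hxy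
  -- sup is everything homogeneous of degree n
  have hsup : A ⊔ B = Hmod n := by
    apply le_antisymm
    · apply sup_le
      · rintro x ⟨a, ha, rfl⟩
        simp only [LinearMap.mulLeft_apply]
        have : (p * a).IsHomogeneous (d + (m + e)) := hp.mul ha
        exact (show d + (m+e) = n by omega) ▸ this
      · rintro x ⟨b, hb, rfl⟩
        simp only [LinearMap.mulLeft_apply]
        have : (q * b).IsHomogeneous (e + (m + d)) := hq.mul hb
        exact (show e + (m+d) = n by omega) ▸ this
    · intro f hf
      have hf' : f.IsHomogeneous n := hf
      obtain ⟨a, b, hab⟩ := Ideal.mem_span_pair.mp (hhom f hf')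
      -- take homogeneous components
      have hcomp := congrArg (homogeneousComponent n) hab
      rw [map_add] at hcomp
      have e1 : homogeneousComponent n (a * p) = homogeneousComponent (m+e) a * p := by
        rw [show n = d + (m+e) by omega]
        exact hc_mul hp
      have e2 : homogeneousComponent n (b * q) = homogeneousComponent (m+d) b * q := by
        rw [show n = e + (m+d) by omega]
        exact hc_mul hq
      have e3 : homogeneousComponent n f = f := by
        rw [homogeneousComponent_of_mem hf, if_pos rfl]
      rw [e1, e2, e3] at hcomp
      rw [← hcomp]
      apply Submodule.add_mem_sup
      · exact ⟨homogeneousComponent (m+e) a, homogeneousComponent_isHomogeneous _ _,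
          by simp [LinearMap.mulLeft_apply, mul_comm]⟩
      · exact ⟨homogeneousComponent (m+d) b, homogeneousComponent_isHomogeneous _ _,
          by simp [LinearMap.mulLeft_apply, mul_comm]⟩
  -- inf is multiples of p*q
  have hinf : A ⊓ B = (Hmod m).map (LinearMap.mulLeft k (p * q)) := by
    apply le_antisymm
    · rintro x ⟨⟨a, ha, hax⟩, ⟨b, hb, hbx⟩⟩
      simp only [LinearMap.mulLeft_apply] at hax hbx
      have hqa : q ∣ a := by
        refine hrp.symm.dvd_of_dvd_mul_left ?_
        exact ⟨b, by rw [hax, hbx]⟩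
      obtain ⟨c, hc⟩ := hqa
      rcases eq_or_ne c 0 with rfl | hc0
      · refine ⟨0, (Hmod m).zero_mem, ?_⟩
        simp only [LinearMap.mulLeft_apply, mul_zero]
        rw [← hax, hc, mul_zero, mul_zero]
      · have hahom : (c * q).IsHomogeneous (e + m) := by
          rw [mul_comm, ← hc]
          exact (show m + e = e + m by omega) ▸ ha
        have hchom : c.IsHomogeneous m := homog_of_mul_right hq hahom hq0
        refine ⟨c, hchom, ?_⟩
        simp only [LinearMap.mulLeft_apply]
        rw [← hax, hc]
        ring
    · rintro x ⟨c, hc, rfl⟩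
      simp only [LinearMap.mulLeft_apply]
      constructor
      · refine ⟨q * c, ?_, ?_⟩
        · exact (show e + m = m + e by omega) ▸ (hq.mul hc)
        · simp only [LinearMap.mulLeft_apply]; ring
      · refine ⟨p * c, ?_, ?_⟩
        · exact (show d + m = m + d by omega) ▸ (hp.mul hc)
        · simp only [LinearMap.mulLeft_apply]; ring
  -- finrank bookkeeping
  haveI : FiniteDimensional k A :=
    Module.Finite.equiv (Submodule.equivMapOfInjective _ hinjp (Hmod (m+e)))
  haveI : FiniteDimensional k B :=
    Module.Finite.equiv (Submodule.equivMapOfInjective _ hinjq (Hmod (m+d)))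
  have hrkA : Module.finrank k A = (m+e+2).choose 2 := by
    rw [← (Submodule.equivMapOfInjective _ hinjp (Hmod (m+e))).finrank_eq]
    exact finrank_H (m+e)
  have hrkB : Module.finrank k B = (m+d+2).choose 2 := by
    rw [← (Submodule.equivMapOfInjective _ hinjq (Hmod (m+d))).finrank_eq]
    exact finrank_H (m+d)
  have hrkSup : Module.finrank k (A ⊔ B : Submodule k (MvPolynomial (Fin 3) k)) = (m+d+e+2).choose 2 := by
    rw [hsup]
    exact finrank_H n
  have hrkInf : Module.finrank k (A ⊓ B : Submodule k (MvPolynomial (Fin 3) k)) = (m+2).choose 2 := by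
    rw [hinf, ← (Submodule.equivMapOfInjective _ hinjpq (Hmod m)).finrank_eq]
    exact finrank_H m
  have hmain := Submodule.finrank_sup_add_finrank_inf_eq A B
  rw [hrkA, hrkB, hrkSup, hrkInf] at hmain
  exact arith hd he hmain

end Stmt10Aux

open MvPolynomial in
/-- (From the non-existence result of Vatne, "Multiple Structures", §2.3.)  Let
`F₁, F₂, F₃ ∈ k[z₀,z₁,z₂]` be homogeneous of the same degree `s ≥ 1` with no common
projective zero (the radical of `(F₁,F₂,F₃)` contains `(z₀,z₁,z₂)`).  If `l₁,…,l₄`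
satisfy the six listed relations, then `l₁ = l₂ = l₃ = l₄ = 0`. -/
theorem stmt10 {k : Type*} [Field k] (s : ℕ) (hs : 1 ≤ s)
    (F₁ F₂ F₃ : MvPolynomial (Fin 3) k)
    (hF₁ : F₁.IsHomogeneous s) (hF₂ : F₂.IsHomogeneous s) (hF₃ : F₃.IsHomogeneous s)
    (hrad : Ideal.span {(X 0 : MvPolynomial (Fin 3) k), X 1, X 2} ≤
      (Ideal.span {F₁, F₂, F₃}).radical)
    (l₁ l₂ l₃ l₄ : MvPolynomial (Fin 3) k)
    (h1 : F₃ * l₂ = F₂ * l₃) (h2 : F₃ * l₁ = F₁ * l₃) (h3 : F₂ * l₁ = F₁ * l₂)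
    (h4 : F₃ * l₃ = F₂ * l₄) (h5 : F₃ * l₂ = F₁ * l₄) (h6 : F₂ * l₂ = F₁ * l₃) :
    l₁ = 0 ∧ l₂ = 0 ∧ l₃ = 0 ∧ l₄ = 0 := by
  have e1 : (F₂ * F₂ - F₁ * F₃) * l₁ = 0 := by linear_combination F₂ * h3 - F₁ * h2 + F₁ * h6
  have e2 : (F₂ * F₂ - F₁ * F₃) * l₂ = 0 := by linear_combination F₂ * h6 - F₁ * h1
  have e3 : (F₂ * F₂ - F₁ * F₃) * l₃ = 0 := by linear_combination (-F₂) * h1 + F₃ * h6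
  have e4 : (F₂ * F₂ - F₁ * F₃) * l₄ = 0 := by
    linear_combination (-F₂) * h4 + (-F₃) * h1 + F₃ * h5
  by_cases hG : F₂ * F₂ - F₁ * F₃ = 0
  · exfalso
    have hsq : F₂ * F₂ = F₁ * F₃ := by linear_combination hG
    have hstep : Ideal.span {F₁, F₂, F₃} ≤ (Ideal.span {F₁, F₃}).radical := by
      rw [Ideal.span_le]
      intro f hf
      simp only [Set.mem_insert_iff, Set.mem_singleton_iff] at hf
      rcases hf with rfl | rfl | rfl
      · exact Ideal.le_radical (Ideal.subset_span (by simp))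
      · exact ⟨2, by
          rw [pow_two, hsq]
          exact Ideal.mul_mem_right _ _ (Ideal.subset_span (by simp))⟩
      · exact Ideal.le_radical (Ideal.subset_span (by simp))
    have hrad2 : Ideal.span {(X 0 : MvPolynomial (Fin 3) k), X 1, X 2} ≤
        (Ideal.span {F₁, F₃}).radical := by
      refine hrad.trans ?_
      have := Ideal.radical_mono hstep
      rwa [Ideal.radical_idem] at this
    obtain ⟨Na, hxa⟩ : ∃ N, (X 0 : MvPolynomial (Fin 3) k) ^ N ∈ Ideal.span {F₁, F₃} :=
      hrad2 (Ideal.subset_span (by simp))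
    obtain ⟨Nb, hxb⟩ : ∃ N, (X 1 : MvPolynomial (Fin 3) k) ^ N ∈ Ideal.span {F₁, F₃} :=
      hrad2 (Ideal.subset_span (by simp))
    obtain ⟨Nc, hxc⟩ : ∃ N, (X 2 : MvPolynomial (Fin 3) k) ^ N ∈ Ideal.span {F₁, F₃} :=
      hrad2 (Ideal.subset_span (by simp))
    by_cases hrp : IsRelPrime F₁ F₃
    · have hF₁0 : F₁ ≠ 0 := by
        rintro rfl
        exact Stmt10Aux.not_isUnit_homog hF₃ hs (hrp (dvd_zero F₃) dvd_rfl)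
      have hF₃0 : F₃ ≠ 0 := by
        rintro rfl
        exact Stmt10Aux.not_isUnit_homog hF₁ hs (hrp dvd_rfl (dvd_zero F₁))
      exact Stmt10Aux.no_two_gens hs hs hF₁ hF₃ hF₁0 hF₃0 hrp hxa hxb hxc
    · rw [IsRelPrime] at hrp
      push_neg at hrp
      obtain ⟨r, hr1, hr3, hru⟩ := hrp
      have hspan : Ideal.span {F₁, F₃} ≤ Ideal.span {r} := by
        rw [Ideal.span_le]
        intro f hf
        simp only [Set.mem_insert_iff, Set.mem_singleton_iff] at hf
        rcases hf with rfl | rfl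
        · exact Ideal.mem_span_singleton.mpr hr1
        · exact Ideal.mem_span_singleton.mpr hr3
      exact hru (Stmt10Aux.unit_of_dvd_pows
        (Ideal.mem_span_singleton.mp (hspan hxa))
        (Ideal.mem_span_singleton.mp (hspan hxb)))
  · have hz : ∀ l : MvPolynomial (Fin 3) k, (F₂ * F₂ - F₁ * F₃) * l = 0 → l = 0 := by
      intro l hl
      rcases mul_eq_zero.mp hl with h | h
      · exact absurd h hG
      · exact h
    exact ⟨hz _ e1, hz _ e2, hz _ e3, hz _ e4⟩
end

section
/- Let k be a field, S = k[z₀,…,z_N] the polynomial ring over k (N ≥ 1), and let P, Q, f, g ∈ S be homogeneous polynomials of positive degree such that (P,Q) is a prime ideal of S, P, Q form a regular sequence in S, and f ∉ (P,Q), g ∉ (P,Q). Let a, b ≥ 2 be natural numbers and set I_X = (P,Q) and I_Z = (f·P^a + g·Q^b, P^{a+1}, P·Q^b, P^a·Q, Q^{b+1}). If A, B, C, D, E ∈ S satisfy A·(f·P^a + g·Q^b) + B·P^{a+1} + C·P·Q^b + D·P^a·Q + E·Q^{b+1} ∈ I_Z·I_X, then A ∈ I_X, and there exist h₁, h₂ ∈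 S such that B − h₁·f ∈ I_X, C − h₁·g ∈ I_X, D − h₂·f ∈ I_X, and E − h₂·g ∈ I_X. -/
/-!
Write `I = (P, Q)`. The relation reads `X·P^a + Y·Q^b = 0` with `X = A f + B P + D Q` and
`Y = A g + C P + E Q`. Since `P, Q` is a regular sequence, every relation between `P` and `Q`
is a multiple of the Koszul relation, and the same then holds for `P^a` and `Q^b`; hence
`X = w Q^b` and `Y = -w P^a`. Then `A f ∈ I`, so `A = α P + β Q ∈ I` by primality, and
substituting back leaves two relations between `P` and `Q` whose Koszul form shows that
`h₁ = -α`, `h₂ = -β` work; `a, b ≥ 2` makes the leftover terms `w P^(a-1)`, `w Q^(b-1)` lie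
in `I`. Membership in `I_Z·I_X` instead of `= 0` changes `A, …, E` only modulo `I`.
-/

section

variable {R : Type*} [CommRing R]

def HasKoszulSyzygies (P Q : R) : Prop :=
  ∀ x y : R, x * P + y * Q = 0 → ∃ t, x = t * Q ∧ y = -(t * P)

namespace HasKoszulSyzygies

theorem of_regular {P Q : R} (hPreg : ∀ x : R, P * x = 0 → x = 0)
    (hQreg : ∀ x : R, Q * x ∈ Ideal.span {P} → x ∈ Ideal.span {P}) :
    HasKoszulSyzygies P Q := by
  intro x y hxy
  obtain ⟨t, rfl⟩ := Ideal.mem_span_singleton'.mp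
    (hQreg y (Ideal.mem_span_singleton'.mpr ⟨-x, by linear_combination -hxy⟩))
  have hx : x + t * Q = 0 := hPreg _ (by linear_combination hxy)
  exact ⟨-t, by linear_combination hx, by ring⟩

theorem symm {P Q : R} (h : HasKoszulSyzygies P Q) : HasKoszulSyzygies Q P := by
  intro x y hxy
  obtain ⟨t, hy, hx⟩ := h y x (by linear_combination hxy)
  exact ⟨-t, by linear_combination hx, by linear_combination hy⟩

theorem mul_left {P₁ P₂ Q : R} (h₁ : HasKoszulSyzygies P₁ Q) (h₂ : HasKoszulSyzygies P₂ Q) :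
    HasKoszulSyzygies (P₁ * P₂) Q := by
  intro x y hxy
  obtain ⟨t, hxt, hyt⟩ := h₂ (x * P₁) y (by linear_combination hxy)
  obtain ⟨s, hxs, hts⟩ := h₁ x (-t) (by linear_combination hxt)
  exact ⟨s, hxs, by linear_combination hyt + P₂ * hts⟩

theorem one_left (Q : R) : HasKoszulSyzygies 1 Q :=
  fun x y hxy => ⟨-y, by linear_combination hxy, by ring⟩

theorem pow_left {P Q : R} (h : HasKoszulSyzygies P Q) : ∀ a : ℕ, HasKoszulSyzygies (P ^ a) Q
  | 0 => by simpa using one_left Q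
  | a + 1 => by simpa [pow_succ] using (pow_left h a).mul_left h

theorem pow_pow {P Q : R} (h : HasKoszulSyzygies P Q) (a b : ℕ) :
    HasKoszulSyzygies (P ^ a) (Q ^ b) :=
  ((h.pow_left a).symm.pow_left b).symm

end HasKoszulSyzygies

theorem Ideal.mem_span_insert_mul {g x : R} {s : Set R} {J : Ideal R} :
    x ∈ Ideal.span (insert g s) * J ↔ ∃ c ∈ J, ∃ y ∈ Ideal.span s * J, x = c * g + y := by
  simp only [Ideal.span_insert, Ideal.sup_mul, Submodule.mem_sup, Ideal.mem_span_singleton_mul]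
  constructor
  · rintro ⟨_, ⟨c, hc, rfl⟩, y, hy, rfl⟩
    exact ⟨c, hc, y, hy, by ring⟩
  · rintro ⟨c, hc, y, hy, rfl⟩
    exact ⟨_, ⟨c, hc, rfl⟩, y, hy, by ring⟩

theorem coeffs_mem_span_pair_of_relation {P Q f g A B C D E : R} {a b : ℕ}
    (hPQ : HasKoszulSyzygies P Q) (hprime : (Ideal.span {P, Q}).IsPrime)
    (hf : f ∉ Ideal.span {P, Q}) (ha : 2 ≤ a) (hb : 2 ≤ b)
    (hrel : A * (f * P ^ a + g * Q ^ b) + B * P ^ (a + 1) + C * (P * Q ^ b) +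
      D * (P ^ a * Q) + E * Q ^ (b + 1) = 0) :
    A ∈ Ideal.span {P, Q} ∧ ∃ h₁ h₂ : R,
      B - h₁ * f ∈ Ideal.span {P, Q} ∧ C - h₁ * g ∈ Ideal.span {P, Q} ∧
      D - h₂ * f ∈ Ideal.span {P, Q} ∧ E - h₂ * g ∈ Ideal.span {P, Q} := by
  obtain ⟨a, rfl⟩ := Nat.exists_eq_add_of_le' ha
  obtain ⟨b, rfl⟩ := Nat.exists_eq_add_of_le' hb
  obtain ⟨w, hX, hY⟩ := hPQ.pow_pow (a + 2) (b + 2) (A * f + B * P + D * Q)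
    (A * g + C * P + E * Q) (by linear_combination hrel)
  have hAf : A * f ∈ Ideal.span {P, Q} :=
    Ideal.mem_span_pair.mpr ⟨-B, w * Q ^ (b + 1) - D, by linear_combination -hX⟩
  have hA : A ∈ Ideal.span {P, Q} := (hprime.mem_or_mem hAf).resolve_right hf
  obtain ⟨α, β, hαβ⟩ := Ideal.mem_span_pair.mp hA
  obtain ⟨t, hB, hD⟩ := hPQ (B + α * f) (D + β * f - w * Q ^ (b + 1))
    (by linear_combination hX + f * hαβ)
  obtain ⟨s, hC, hE⟩ := hPQ (C + α * g + w * P ^ (a + 1)) (E + β * g)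
    (by linear_combination hY + g * hαβ)
  refine ⟨hA, -α, -β, Ideal.mem_span_pair.mpr ⟨0, t, ?_⟩,
    Ideal.mem_span_pair.mpr ⟨-(w * P ^ a), s, ?_⟩, Ideal.mem_span_pair.mpr ⟨-t, w * Q ^ b, ?_⟩,
    Ideal.mem_span_pair.mpr ⟨-s, 0, ?_⟩⟩
  · linear_combination -hB
  · linear_combination -hC
  · linear_combination -hD
  · linear_combination -hE

end

open MvPolynomial in
theorem stmt11_general {k : Type*} [Field k] (N : ℕ)
    (P Q f g : MvPolynomial (Fin (N + 1)) k)
    (hprime : (Ideal.span {P, Q}).IsPrime)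
    (hPreg : ∀ x : MvPolynomial (Fin (N + 1)) k, P * x = 0 → x = 0)
    (hQreg : ∀ x : MvPolynomial (Fin (N + 1)) k,
      Q * x ∈ Ideal.span {P} → x ∈ Ideal.span {P})
    (hfnot : f ∉ Ideal.span {P, Q})
    (a b : ℕ) (ha : 2 ≤ a) (hb : 2 ≤ b)
    (A B C D E : MvPolynomial (Fin (N + 1)) k)
    (hmem : A * (f * P ^ a + g * Q ^ b) + B * P ^ (a + 1) + C * (P * Q ^ b) +
        D * (P ^ a * Q) + E * Q ^ (b + 1) ∈
      Ideal.span {f * P ^ a + g * Q ^ b, P ^ (a + 1), P * Q ^ b, P ^ a * Q, Q ^ (b + 1)} *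
        Ideal.span {P, Q}) :
    A ∈ Ideal.span {P, Q} ∧
      ∃ h₁ h₂ : MvPolynomial (Fin (N + 1)) k,
        B - h₁ * f ∈ Ideal.span {P, Q} ∧ C - h₁ * g ∈ Ideal.span {P, Q} ∧
        D - h₂ * f ∈ Ideal.span {P, Q} ∧ E - h₂ * g ∈ Ideal.span {P, Q} := by
  simp only [Ideal.mem_span_insert_mul, Ideal.mem_span_singleton_mul] at hmem
  obtain ⟨c₁, hc₁, _, ⟨c₂, hc₂, _, ⟨c₃, hc₃, _, ⟨c₄, hc₄, _, ⟨c₅, hc₅, rfl⟩, rfl⟩, rfl⟩, rfl⟩,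
    hsum⟩ := hmem
  have hrel : (A - c₁) * (f * P ^ a + g * Q ^ b) + (B - c₂) * P ^ (a + 1) +
      (C - c₃) * (P * Q ^ b) + (D - c₄) * (P ^ a * Q) + (E - c₅) * Q ^ (b + 1) = 0 := by
    linear_combination hsum
  obtain ⟨hA, h₁, h₂, hB, hC, hD, hE⟩ := coeffs_mem_span_pair_of_relation
    (.of_regular hPreg hQreg) hprime hfnot ha hb hrel
  refine ⟨?_, h₁, h₂, ?_, ?_, ?_, ?_⟩
  · convert add_mem hA hc₁ using 1; ring
  · convert add_mem hB hc₂ using 1; ring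
  · convert add_mem hC hc₃ using 1; ring
  · convert add_mem hD hc₄ using 1; ring
  · convert add_mem hE hc₅ using 1; ring

open MvPolynomial in
/-- (Key computation in Vatne, "Multiple Structures", Ch. 5.)  In `S = k[z₀,…,z_N]`, let
`P, Q, f, g` be homogeneous of positive degree with `(P,Q)` prime, `P, Q` a regular
sequence, and `f, g ∉ (P,Q)`; let `a, b ≥ 2`,
`I_X = (P,Q)` and `I_Z = (f·P^a + g·Q^b, P^(a+1), P·Q^b, P^a·Q, Q^(b+1))`.  If
`A·(f·P^a+g·Q^b) + B·P^(a+1) + C·P·Q^b + D·P^a·Q + E·Q^(b+1) ∈ I_Z·I_X`, then `A ∈ I_X`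
and there are `h₁, h₂` with `B − h₁·f, C − h₁·g, D − h₂·f, E − h₂·g ∈ I_X`. -/
theorem stmt11 {k : Type*} [Field k] (N : ℕ) (hN : 1 ≤ N)
    (P Q f g : MvPolynomial (Fin (N + 1)) k)
    (hP : ∃ d : ℕ, 0 < d ∧ P.IsHomogeneous d) (hQ : ∃ d : ℕ, 0 < d ∧ Q.IsHomogeneous d)
    (hf : ∃ d : ℕ, 0 < d ∧ f.IsHomogeneous d) (hg : ∃ d : ℕ, 0 < d ∧ g.IsHomogeneous d)
    (hprime : (Ideal.span {P, Q}).IsPrime)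
    (hPreg : ∀ x : MvPolynomial (Fin (N + 1)) k, P * x = 0 → x = 0)
    (hQreg : ∀ x : MvPolynomial (Fin (N + 1)) k,
      Q * x ∈ Ideal.span {P} → x ∈ Ideal.span {P})
    (hfnot : f ∉ Ideal.span {P, Q}) (hgnot : g ∉ Ideal.span {P, Q})
    (a b : ℕ) (ha : 2 ≤ a) (hb : 2 ≤ b)
    (A B C D E : MvPolynomial (Fin (N + 1)) k)
    (hmem : A * (f * P ^ a + g * Q ^ b) + B * P ^ (a + 1) + C * (P * Q ^ b) +
        D * (P ^ a * Q) + E * Q ^ (b + 1) ∈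
      Ideal.span {f * P ^ a + g * Q ^ b, P ^ (a + 1), P * Q ^ b, P ^ a * Q, Q ^ (b + 1)} *
        Ideal.span {P, Q}) :
    A ∈ Ideal.span {P, Q} ∧
      ∃ h₁ h₂ : MvPolynomial (Fin (N + 1)) k,
        B - h₁ * f ∈ Ideal.span {P, Q} ∧ C - h₁ * g ∈ Ideal.span {P, Q} ∧
        D - h₂ * f ∈ Ideal.span {P, Q} ∧ E - h₂ * g ∈ Ideal.span {P, Q} :=
  stmt11_general N P Q f g hprime hPreg hQreg hfnot a b ha hb A B C D E hmem
end
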